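/- arXiv:math/9906087 — 3 statements merged into one kernel-verified Lean document; each statement's English description precedes it below -/
import Mathlib

section
/- Let G be a group and g_1,...,g_n elements of G such that the 'non-commutation graph' (vertices 1,...,n, with an edge between i and j iff g_i g_j ≠ g_j g_i) is a forest (acyclic). Then all products g_{σ(1)} g_{σ(2)} ··· g_{σ(n)} over permutations σ of {1,...,n} are conjugate in G. -/
/-! A forest has a leaf: some letter `v` fails to commute with at most one other letter `w`.
Conjugating by a cyclic rotation brings `v` to the front of any ordering, and commuting it to the
right brings it next to `w`, so every ordering is conjugate to an ordering of the shorter word in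
which the pair is replaced by the single letter `v * w`. That letter fails to commute only with
letters `w` fails to commute with, so the new non-commutation graph is again a forest and induction
on the length applies. If `v` commutes with everything it is instead absorbed into a prefix `a`
commuting with all letters, which is why the induction is run on products `a * l.prod`. -/

theorem List.append_cons_perm_cons_append {α : Type*} (a : α) (l₁ l₂ : List α) :
    (l₁ ++ a :: l₂).Perm (a :: (l₂ ++ l₁)) :=
  List.perm_middle.trans (List.perm_append_comm.cons a)

theorem Multiset.countP_le_countP_of_imp {α : Type*} {p q : α → Prop} [DecidablePred p]
    [DecidablePred q] {s : Multiset α} (h : ∀ a ∈ s, p a → q a) :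
    s.countP p ≤ s.countP q := by
  induction s using Quotient.inductionOn
  simp only [Multiset.quot_mk_to_coe, Multiset.coe_countP]
  exact List.countP_mono_left (by simpa using h)

theorem Multiset.exists_le_eq_map_of_le_map {α β : Type*} {f : α → β} {s : Multiset α}
    {t : Multiset β} (h : t ≤ s.map f) : ∃ u ≤ s, t = u.map f := by
  induction s using Quotient.inductionOn
  induction t using Quotient.inductionOn
  obtain ⟨l, hperm, hsub⟩ := h
  obtain ⟨l', hsub', rfl⟩ := List.sublist_map_iff.mp hsub
  exact ⟨l', hsub'.subperm,
    (Multiset.coe_eq_coe.mpr hperm.symm).trans (Multiset.map_coe f l').symm⟩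

/-- The last vertex of a longest path is a leaf: each of its neighbours lies on the path, hence
is the penultimate vertex. -/
theorem SimpleGraph.IsAcyclic.exists_subsingleton_neighborSet {V : Type*} [Finite V] [Nonempty V]
    {G : SimpleGraph V} (hG : G.IsAcyclic) : ∃ v, (G.neighborSet v).Subsingleton := by
  obtain ⟨u, v, p, hp, hlongest⟩ := Walk.exists_isPath_forall_isPath_length_le_length G
  have hsupp {w} (hvw : G.Adj v w) : w ∈ p.support := by
    by_contra hw
    have := hlongest _ _ _ (hp.concat hw hvw)
    rw [Walk.length_concat] at this
    omega
  exact ⟨v, fun w hw w' hw' =>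
    (hG.eq_penultimate_of_adj_end hp hw (hsupp hw)).trans
      (hG.eq_penultimate_of_adj_end hp hw' (hsupp hw')).symm⟩

section Products

variable {G : Type*} [Group G]

theorem isConj_mul_prod_append_comm {a : G} {x y : List G} (ha : ∀ z ∈ x, Commute a z) :
    IsConj (a * (x ++ y).prod) (a * (y ++ x).prod) := by
  refine isConj_iff.mpr ⟨x.prod⁻¹, ?_⟩
  rw [List.prod_append, List.prod_append]
  calc x.prod⁻¹ * (a * (x.prod * y.prod)) * x.prod⁻¹⁻¹
      = x.prod⁻¹ * (a * x.prod) * y.prod * x.prod := by group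
    _ = a * (y.prod * x.prod) := by
      rw [(Commute.list_prod_right x a ha).eq]
      group

theorem exists_perm_cons_isConj_mul_prod {a v : G} {l : List G} (hv : v ∈ l)
    (ha : ∀ z ∈ l, Commute a z) :
    ∃ m, l.Perm (v :: m) ∧ IsConj (a * l.prod) (a * (v :: m).prod) := by
  obtain ⟨x, y, rfl⟩ := List.append_of_mem hv
  refine ⟨y ++ x, List.append_cons_perm_cons_append v x y, ?_⟩
  simpa using isConj_mul_prod_append_comm (y := v :: y) fun z hz => ha z (by simp [hz])

open scoped Classical in
theorem exists_perm_cons_isConj_mul_prod_cons_mul {a v w : G} {m : List G}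
    (hleaf : (m : Multiset G).countP (fun z => ¬Commute v z) ≤ 1) (hw : w ∈ m)
    (hvw : ¬Commute v w) (ha : ∀ z ∈ m, Commute a z) :
    ∃ k, m.Perm (w :: k) ∧ (∀ z ∈ k, Commute v z) ∧
      IsConj (a * (v :: m).prod) (a * ((v * w) :: k).prod) := by
  obtain ⟨p, q, rfl⟩ := List.append_of_mem hw
  have hperm := List.append_cons_perm_cons_append w p q
  rw [Multiset.coe_eq_coe.mpr hperm, ← Multiset.cons_coe, Multiset.countP_cons, if_pos hvw]
    at hleaf
  have hcomm : ∀ z ∈ q ++ p, Commute v z := by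
    have hzero : (↑(q ++ p) : Multiset G).countP (fun z => ¬Commute v z) = 0 := by omega
    simpa using Multiset.countP_eq_zero.mp hzero
  refine ⟨q ++ p, hperm, hcomm, ?_⟩
  have hmerge : (v :: (p ++ w :: q)).prod = (p ++ (v * w) :: q).prod := by
    simp only [List.prod_cons, List.prod_append, ← mul_assoc,
      (Commute.list_prod_right p v fun z hz => hcomm z (by simp [hz])).eq]
  rw [hmerge]
  exact isConj_mul_prod_append_comm fun z hz => ha z (by simp [hz])

end Products

section Forest

open scoped Classical

variable {G : Type*} [Group G]

/-- The non-commutation graph on the positions of `s` is a forest, in the form: every nonempty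
induced subgraph has a vertex of degree at most `1`. -/
def NoncommForest (s : Multiset G) : Prop :=
  ∀ t ≤ s, t ≠ 0 → ∃ v ∈ t, t.countP (fun z => ¬Commute v z) ≤ 1

theorem NoncommForest.mono {s t : Multiset G} (hs : NoncommForest s) (hts : t ≤ s) :
    NoncommForest t :=
  fun u hut => hs u (hut.trans hts)

theorem NoncommForest.cons_of_commute_imp {s : Multiset G} {w h : G}
    (hs : NoncommForest (w ::ₘ s)) (hwh : ∀ z ∈ s, Commute w z → Commute h z) :
    NoncommForest (h ::ₘ s) := by
  intro t hts hne
  by_cases hht : h ∈ t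
  swap
  · exact hs t (((Multiset.le_cons_of_notMem hht).mp hts).trans (Multiset.le_cons_self s w)) hne
  obtain ⟨t, rfl⟩ := Multiset.exists_cons_of_mem hht
  have hts : t ≤ s := (Multiset.cons_le_cons_iff h).mp hts
  obtain ⟨v, hv, hleaf⟩ := hs (w ::ₘ t) (Multiset.cons_le_cons w hts) (by simp)
  rw [Multiset.countP_cons] at hleaf
  rcases Multiset.mem_cons.mp hv with rfl | hv
  · refine ⟨h, Multiset.mem_cons_self h t, ?_⟩
    rw [Multiset.countP_cons, if_neg (not_not.mpr (Commute.refl h))]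
    refine (Multiset.countP_le_countP_of_imp fun z hz => ?_).trans (by simpa using hleaf)
    exact mt (hwh z (Multiset.mem_of_le hts hz))
  · refine ⟨v, Multiset.mem_cons_of_mem hv, ?_⟩
    have hvh : Commute v w → Commute v h := fun hvw =>
      (hwh v (Multiset.mem_of_le hts hv) hvw.symm).symm
    rw [Multiset.countP_cons]
    by_cases hvw : Commute v w
    · simpa [hvh hvw, hvw] using hleaf
    · split_ifs at hleaf ⊢ <;> omega

theorem NoncommForest.mul_cons {s : Multiset G} {v w : G} (hs : NoncommForest (v ::ₘ w ::ₘ s))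
    (hv : ∀ z ∈ s, Commute v z) : NoncommForest ((v * w) ::ₘ s) :=
  (hs.mono (Multiset.le_cons_self _ v)).cons_of_commute_imp fun z hz hwz => (hv z hz).mul_left hwz

theorem NoncommForest.isConj_mul_prod_of_perm {l l' : List G}
    (hl : NoncommForest (l : Multiset G)) (hperm : l.Perm l') {a : G}
    (ha : ∀ z ∈ l, Commute a z) : IsConj (a * l.prod) (a * l'.prod) := by
  induction hn : l.length using Nat.strong_induction_on generalizing a l l' with
  | _ n ih =>
  rcases eq_or_ne l [] with rfl | hne
  · rw [← hperm.nil_eq]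
  obtain ⟨v, hv, hleaf⟩ := hl l le_rfl (by simpa using hne)
  obtain ⟨m, hlm, hconj⟩ := exists_perm_cons_isConj_mul_prod hv ha
  obtain ⟨m', hlm', hconj'⟩ :=
    exists_perm_cons_isConj_mul_prod (hperm.subset hv) fun z hz => ha z (hperm.mem_iff.mpr hz)
  refine hconj.trans (IsConj.trans ?_ hconj'.symm)
  have hmm' : m.Perm m' := (hlm.symm.trans (hperm.trans hlm')).cons_inv
  rw [Multiset.coe_eq_coe.mpr hlm] at hl hleaf
  replace hleaf : (m : Multiset G).countP (fun z => ¬Commute v z) ≤ 1 := by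
    simpa [← Multiset.cons_coe] using hleaf
  replace ha : ∀ z ∈ v :: m, Commute a z := fun z hz => ha z (hlm.mem_iff.mpr hz)
  have hlen : m.length < n := by rw [← hn, hlm.length_eq]; simp
  by_cases hall : ∀ z ∈ m, Commute v z
  · simp only [List.prod_cons, ← mul_assoc]
    exact ih _ hlen (hl.mono (Multiset.le_cons_self _ v)) hmm'
      (fun z hz => (ha z (.tail v hz)).mul_left (hall z hz)) rfl
  push Not at hall
  obtain ⟨w, hw, hvw⟩ := hall
  obtain ⟨k, hmk, hk, hconjk⟩ :=
    exists_perm_cons_isConj_mul_prod_cons_mul hleaf hw hvw fun z hz => ha z (.tail v hz)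
  obtain ⟨k', hmk', -, hconjk'⟩ := exists_perm_cons_isConj_mul_prod_cons_mul
    (by rwa [Multiset.coe_eq_coe.mpr hmm'] at hleaf) (hmm'.subset hw) hvw
    fun z hz => ha z (.tail v (hmm'.mem_iff.mpr hz))
  refine hconjk.trans (IsConj.trans ?_ hconjk'.symm)
  have hvwk : ((v :: m : List G) : Multiset G) = v ::ₘ w ::ₘ k :=
    Multiset.coe_eq_coe.mpr (hmk.cons v)
  refine ih _ (by simpa [hmk.length_eq] using hlen) ((hl.mono hvwk.ge).mul_cons hk)
    ((hmk.symm.trans (hmm'.trans hmk')).cons_inv.cons _) ?_ rfl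
  rintro z (_ | ⟨_, hz⟩)
  · exact (ha v (by simp)).mul_right (ha w (.tail v hw))
  · exact ha z (.tail v (hmk.mem_iff.mpr (.tail w hz)))

theorem noncommForest_map_univ_of_isAcyclic {ι : Type*} [Fintype ι] {g : ι → G}
    {H : SimpleGraph ι} (hadj : ∀ i j, i ≠ j → ¬Commute (g i) (g j) → H.Adj i j)
    (hH : H.IsAcyclic) : NoncommForest (Finset.univ.val.map g) := by
  intro t ht hne
  obtain ⟨u, hu, rfl⟩ := Multiset.exists_le_eq_map_of_le_map ht
  set I : Finset ι := ⟨u, Multiset.nodup_of_le hu Finset.univ.nodup⟩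
  obtain ⟨i, hi⟩ := Multiset.exists_mem_of_ne_zero (by simpa using hne)
  have : Nonempty (I : Set ι) := ⟨⟨i, hi⟩⟩
  obtain ⟨⟨i, hi⟩, hleaf⟩ := (hH.induce (I : Set ι)).exists_subsingleton_neighborSet
  refine ⟨g i, Multiset.mem_map_of_mem g hi, ?_⟩
  rw [Multiset.countP_map]
  change (I.filter fun j => ¬Commute (g i) (g j)).card ≤ 1
  have hnbr {j} (hj : j ∈ I.filter fun j => ¬Commute (g i) (g j)) :
      ⟨j, (Finset.mem_filter.mp hj).1⟩ ∈ (H.induce (I : Set ι)).neighborSet ⟨i, hi⟩ := by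
    obtain ⟨-, hij⟩ := Finset.mem_filter.mp hj
    simpa using hadj i j (by rintro rfl; exact hij (Commute.refl _)) hij
  refine Finset.card_le_one.mpr fun j hj k hk => ?_
  simpa using hleaf (hnbr hj) (hnbr hk)

end Forest

/-- Bourbaki's lemma: If the non-commutation graph of elements
`g 1, …, g n` of a group is a forest, then all products of the `g i` in any
order are conjugate. -/
theorem products_conjugate_of_noncommutation_forest
    (n : ℕ) (G : Type*) [Group G] (g : Fin n → G)
    (H : SimpleGraph (Fin n))
    (hH : ∀ i j, H.Adj i j ↔ (i ≠ j ∧ g i * g j ≠ g j * g i))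
    (hforest : H.IsAcyclic) :
    ∀ σ τ : Equiv.Perm (Fin n),
      IsConj ((List.ofFn (fun i => g (σ i))).prod)
             ((List.ofFn (fun i => g (τ i))).prod) := by
  intro σ τ
  have hforest' : NoncommForest (List.ofFn g : Multiset G) := by
    rw [← Fin.univ_val_map]
    exact noncommForest_map_univ_of_isAcyclic (fun i j hij hc => (hH i j).mpr ⟨hij, hc⟩) hforest
  have hperm (ρ : Equiv.Perm (Fin n)) : (List.ofFn fun i => g (ρ i)).Perm (List.ofFn g) :=
    ρ.ofFn_comp_perm g
  simpa using (hforest'.mono (Multiset.coe_eq_coe.mpr (hperm σ)).le).isConj_mul_prod_of_perm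
    ((hperm σ).trans (hperm τ).symm) (a := 1) fun z _ => Commute.one_left z
end

section
/- Let A be a tree on n vertices with bicolored vertex ordering as above, with Coxeter element C_A (product of the reflections R_i) and skew Coxeter element sC_A (product of the transvections T_i, taken in the same order). Then sC_A = -C_A as linear endomorphisms of R^n, when the reflections are taken in the bipartite order: first all R_i with i ≤ m, then all R_j with j > m. -/
/-!
Write `A` for the adjacency matrix, `E i` for the matrix unit at `(i, i)`, and `e`, `f = 1 - e` for
the diagonal projections onto the two colour classes. Then `R i = 1 + E i * (A - 2)` and
`T i = 1 ± E i * A`, the sign being that of the colour of `i`. Within a colour class the summands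
`E i * M` multiply to zero, so each half of either product collapses to a sum:
`C_A = (1 + e (A - 2)) (1 + f (A - 2))` and `sC_A = (1 + e A) (1 - f A)`. Since no edge joins two
vertices of the first class, `e A e = 0`, and this is all the ring identity `sC_A = -C_A` needs.
-/

open Matrix

theorem List.prod_map_one_add_of_pairwise_mul_eq_zero {A : Type*} [Ring A] {L : List A}
    (hL : L.Pairwise fun x y => x * y = 0) :
    (L.map (1 + ·)).prod = 1 + L.sum := by
  induction L with
  | nil => simp
  | cons a L ih =>
    obtain ⟨ha, hL⟩ := List.pairwise_cons.1 hL
    have hzero : a * L.sum = 0 :=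
      (map_list_sum (AddMonoidHom.mulLeft a) L).trans (List.sum_eq_zero (by simpa using ha))
    rw [List.map_cons, List.prod_cons, List.sum_cons, ih hL, add_mul, one_mul, mul_add, mul_one,
      hzero, add_zero]
    abel

theorem List.mem_take_finRange {n m : ℕ} (k : Fin n) :
    k ∈ (List.finRange n).take m ↔ (k : ℕ) < m := by
  rw [List.mem_take_iff_idxOf_lt (List.mem_finRange k), List.idxOf_finRange]

theorem List.mem_drop_finRange {n m : ℕ} (k : Fin n) :
    k ∈ (List.finRange n).drop m ↔ m ≤ (k : ℕ) := by
  simp only [List.mem_drop_iff_getElem, List.getElem_finRange, List.length_finRange]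
  constructor
  · rintro ⟨j, hj, rfl⟩
    simp
  · intro h
    exact ⟨k - m, by omega, Fin.ext (by simp; omega)⟩

theorem IsIdempotentElem.skew_coxeter_eq_neg_coxeter {A : Type*} [Ring A] {e f N : A}
    (he : IsIdempotentElem e) (hef : e + f = 1) (hN : e * N * e = 0) :
    (1 + e * ((e - f) * N)) * (1 + f * ((e - f) * N)) =
      -((1 + e * (N - 2)) * (1 + f * (N - 2))) := by
  obtain rfl : f = 1 - e := eq_sub_of_add_eq' hef
  have hee : e * (e - (1 - e)) = e := by noncomm_ring; rw [he.eq]; abel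
  have hfe : (1 - e) * (e - (1 - e)) = -(1 - e) := by noncomm_ring; rw [he.eq]; abel
  have heeN : e * (e * N) = e * N := by rw [← mul_assoc, he.eq]
  have heNe : e * (N * e) = 0 := by rw [← mul_assoc, hN]
  rw [← mul_assoc, ← mul_assoc, hee, hfe]
  noncomm_ring
  rw [heeN, heNe, he.eq]
  abel

namespace Matrix

variable {ι R : Type*} [DecidableEq ι] [Ring R]

theorem one_add_single_mul_apply [Fintype ι] (M : Matrix ι ι R) (i k j : ι) :
    (1 + single i i 1 * M : Matrix ι ι R) k j =
      (if k = j then 1 else 0) + (if k = i then M i j else 0) := by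
  by_cases hk : k = i
  · subst hk; simp [one_apply]
  · simp [one_apply, hk]

theorem sum_map_single_eq_diagonal {L : List ι} (hL : L.Nodup) (p : ι → Prop) [DecidablePred p]
    (hLp : ∀ k, k ∈ L ↔ p k) :
    (L.map fun i => single i i (1 : R)).sum = diagonal fun k => if p k then 1 else 0 := by
  rw [← List.sum_toFinset _ hL]
  ext k l
  by_cases hkl : k = l
  · subst hkl
    by_cases hk : p k <;> simp [Matrix.sum_apply, single_apply, hLp, hk]
  · rw [diagonal_apply_ne _ hkl, Matrix.sum_apply]
    exact Finset.sum_eq_zero fun i _ =>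
      single_apply_of_ne _ _ _ _ _ (by rintro ⟨rfl, rfl⟩; exact hkl rfl)

theorem list_prod_map_one_add_single_mul [Fintype ι] (M : Matrix ι ι R) {L : List ι}
    (hL : L.Nodup) (p : ι → Prop) [DecidablePred p] (hLp : ∀ k, k ∈ L ↔ p k)
    (hM : ∀ i j, p i → p j → i ≠ j → M i j = 0) :
    (L.map fun i => 1 + single i i 1 * M).prod =
      1 + diagonal (fun k => if p k then 1 else 0) * M := by
  have hpair : (L.map fun i => single i i (1 : R) * M).Pairwise fun x y => x * y = 0 := by
    refine List.pairwise_map.2 (hL.imp_of_mem fun {i j} hi hj hij => ?_)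
    rw [← mul_assoc, single_mul_mul_single, hM i j ((hLp i).1 hi) ((hLp j).1 hj) hij]
    simp
  calc (L.map fun i => 1 + single i i 1 * M).prod
      = ((L.map fun i => single i i 1 * M).map (1 + ·)).prod := by rw [List.map_map]; rfl
    _ = _ := by
      rw [List.prod_map_one_add_of_pairwise_mul_eq_zero hpair, List.sum_map_mul_right,
        sum_map_single_eq_diagonal hL p hLp]

end Matrix

theorem SimpleGraph.prod_transvections_eq_neg_prod_reflections {ι R : Type*} [Fintype ι]
    [DecidableEq ι] [Ring R] (G : SimpleGraph ι) [DecidableRel G.Adj] (p : ι → Prop)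
    [DecidablePred p] (hbip : ∀ i j, G.Adj i j → (p i ↔ ¬ p j)) {L₁ L₂ : List ι}
    (hL₁ : L₁.Nodup) (hL₂ : L₂.Nodup) (hmem₁ : ∀ k, k ∈ L₁ ↔ p k)
    (hmem₂ : ∀ k, k ∈ L₂ ↔ ¬ p k) :
    ((L₁ ++ L₂).map fun i =>
        1 + single i i 1 * (diagonal (fun k => if p k then 1 else -1) * G.adjMatrix R)).prod =
      -((L₁ ++ L₂).map fun i => 1 + single i i 1 * (G.adjMatrix R - 2)).prod := by
  set e : Matrix ι ι R := diagonal fun k => if p k then 1 else 0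
  set f : Matrix ι ι R := diagonal fun k => if ¬ p k then 1 else 0
  have hsign : diagonal (fun k => if p k then (1 : R) else -1) = e - f := by
    rw [diagonal_sub]; congr 1; ext k; split_ifs <;> simp
  have hef : e + f = 1 := by
    rw [diagonal_add, ← diagonal_one]; congr 1; ext k; split_ifs <;> simp
  have he : IsIdempotentElem e := by
    rw [IsIdempotentElem, diagonal_mul_diagonal]; congr 1; ext k; split_ifs <;> simp
  have hadj : ∀ i j, (p i ↔ p j) → G.adjMatrix R i j = 0 := fun i j hij => by
    rw [adjMatrix_apply, if_neg fun h => by have := hbip i j h; tauto]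
  have hN : e * G.adjMatrix R * e = 0 := by
    ext k l
    simp only [e, diagonal_mul, mul_diagonal, Matrix.zero_apply]
    by_cases hk : p k
    · by_cases hl : p l
      · rw [hadj k l (iff_of_true hk hl), mul_zero, zero_mul]
      · simp [hl]
    · simp [hk]
  have hskew_zero : ∀ i j, (p i ↔ p j) →
      (diagonal (fun k => if p k then (1 : R) else -1) * G.adjMatrix R) i j = 0 := by
    intro i j hij
    rw [diagonal_mul, hadj i j hij, mul_zero]
  have hsym_zero : ∀ i j, (p i ↔ p j) → i ≠ j → (G.adjMatrix R - 2) i j = 0 := by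
    intro i j hij hne
    rw [Matrix.sub_apply, hadj i j hij, ← diagonal_ofNat, diagonal_apply_ne _ hne, sub_zero]
  rw [List.map_append, List.map_append, List.prod_append, List.prod_append,
    list_prod_map_one_add_single_mul _ hL₁ p hmem₁
      fun i j hi hj _ => hskew_zero i j (iff_of_true hi hj),
    list_prod_map_one_add_single_mul _ hL₂ _ hmem₂
      fun i j hi hj _ => hskew_zero i j (iff_of_false hi hj),
    list_prod_map_one_add_single_mul _ hL₁ p hmem₁
      fun i j hi hj => hsym_zero i j (iff_of_true hi hj),
    list_prod_map_one_add_single_mul _ hL₂ _ hmem₂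
      fun i j hi hj => hsym_zero i j (iff_of_false hi hj),
    hsign]
  exact he.skew_coxeter_eq_neg_coxeter hef hN

theorem skew_coxeter_eq_neg_coxeter_general
    (n m : ℕ) (G : SimpleGraph (Fin n)) [DecidableRel G.Adj]
    (hbip : ∀ i j, G.Adj i j → ((i : ℕ) < m ↔ ¬ (j : ℕ) < m))
    (q : Fin n → Fin n → ℝ)
    (hq : ∀ i j, q i j = if i = j then (-2 : ℝ) else if G.Adj i j then 1 else 0)
    (sq : Fin n → Fin n → ℝ)
    (hsq : ∀ i j, sq i j =
      if G.Adj i j then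
        (if (i : ℕ) < m ∧ m ≤ (j : ℕ) then (1 : ℝ)
         else if (j : ℕ) < m ∧ m ≤ (i : ℕ) then -1 else 0)
      else 0)
    (R : Fin n → Matrix (Fin n) (Fin n) ℝ)
    (hR : ∀ i k j, R i k j =
      (if k = j then (1 : ℝ) else 0) + (if k = i then q i j else 0))
    (T : Fin n → Matrix (Fin n) (Fin n) ℝ)
    (hTr : ∀ i k j, T i k j =
      (if k = j then (1 : ℝ) else 0) + (if k = i then sq i j else 0)) :
    ((List.finRange n).map T).prod = -(((List.finRange n).map R).prod) := by
  set sign : Matrix (Fin n) (Fin n) ℝ := diagonal fun k => if (k : ℕ) < m then 1 else -1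
  have hq' : ∀ i j, q i j = (G.adjMatrix ℝ - 2) i j := by
    intro i j
    rw [hq, Matrix.sub_apply, SimpleGraph.adjMatrix_apply, ← diagonal_ofNat, diagonal_apply]
    by_cases hij : i = j
    · subst hij; simp
    · simp [hij]
  have hsq' : ∀ i j, sq i j = (sign * G.adjMatrix ℝ) i j := by
    intro i j
    rw [hsq, diagonal_mul, SimpleGraph.adjMatrix_apply]
    by_cases hij : G.Adj i j
    · have := hbip i j hij
      by_cases hi : (i : ℕ) < m
      · simp [hij, hi]; omega
      · simp [hij, hi]; omega
    · simp [hij]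
  have hR' : R = fun i => 1 + single i i 1 * (G.adjMatrix ℝ - 2) := by
    funext i; ext k j; rw [hR, one_add_single_mul_apply, hq']
  have hT' : T = fun i => 1 + single i i 1 * (sign * G.adjMatrix ℝ) := by
    funext i; ext k j; rw [hTr, one_add_single_mul_apply, hsq']
  rw [hT', hR', ← List.take_append_drop m (List.finRange n)]
  exact G.prod_transvections_eq_neg_prod_reflections (fun k => (k : ℕ) < m) hbip
    ((List.nodup_finRange n).sublist (List.take_sublist m _))
    ((List.nodup_finRange n).sublist (List.drop_sublist m _))
    List.mem_take_finRange (fun k => by rw [List.mem_drop_finRange, not_lt])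

/-- For a bipartite-ordered tree, the skew Coxeter element
(product of the transvections in bipartite order) equals minus the Coxeter
element (product of the reflections in the same bipartite order). -/
theorem skew_coxeter_eq_neg_coxeter
    (n m : ℕ) (G : SimpleGraph (Fin n)) [DecidableRel G.Adj] (hT : G.IsTree)
    (hbip : ∀ i j, G.Adj i j → ((i : ℕ) < m ↔ ¬ (j : ℕ) < m))
    (q : Fin n → Fin n → ℝ)
    (hq : ∀ i j, q i j = if i = j then (-2 : ℝ) else if G.Adj i j then 1 else 0)
    (sq : Fin n → Fin n → ℝ)
    (hsq : ∀ i j, sq i j =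
      if G.Adj i j then
        (if (i : ℕ) < m ∧ m ≤ (j : ℕ) then (1 : ℝ)
         else if (j : ℕ) < m ∧ m ≤ (i : ℕ) then -1 else 0)
      else 0)
    (R : Fin n → Matrix (Fin n) (Fin n) ℝ)
    (hR : ∀ i k j, R i k j =
      (if k = j then (1 : ℝ) else 0) + (if k = i then q i j else 0))
    (T : Fin n → Matrix (Fin n) (Fin n) ℝ)
    (hTr : ∀ i k j, T i k j =
      (if k = j then (1 : ℝ) else 0) + (if k = i then sq i j else 0)) :
    ((List.finRange n).map T).prod = -(((List.finRange n).map R).prod) :=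
  skew_coxeter_eq_neg_coxeter_general n m G hbip q hq sq hsq R hR T hTr
end

section
/- The characteristic polynomial of the Coxeter element of the tree E_10 (the tree obtained from the Dynkin diagram E_8 by lengthening the long arm by two vertices; i.e., a path of 9 vertices with one extra vertex attached to the third vertex from one end) is Lehmer's polynomial x^10 + x^9 - x^7 - x^6 - x^5 - x^4 - x^3 + x + 1, which has a real root strictly greater than 1. -/
/-!
Order the vertices of `E₁₀` evens first, odds second; both classes are independent sets, so the
product of the reflections in either class acts blockwise and the Coxeter element takes the form
`[[B Bᵀ - 1, -B], [Bᵀ, -1]]`, with `B` the `5 × 5` even–odd adjacency matrix. A block column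
operation on `x - C` gives `χ_C(x) = det ((x + 1)² - x B Bᵀ)`. Here `B Bᵀ` is tridiagonal, and
expanding this `5 × 5` determinant yields Lehmer's polynomial. Its value is `-1` at `1` and
positive at `2`, so it has a root in `(1, 2)`.
-/

open Polynomial

/-- The tree `E₁₀`: a path `u₁, …, u₉` (indices `0, …, 8`) together with an
extra vertex (index `9`) attached to the third vertex (index `2`). -/
def e10Adj (i j : Fin 10) : Bool :=
  ((i : ℕ) + 1 == (j : ℕ) && (j : ℕ) ≤ 8) ||
  ((j : ℕ) + 1 == (i : ℕ) && (i : ℕ) ≤ 8) ||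
  ((i : ℕ) == 2 && (j : ℕ) == 9) || ((i : ℕ) == 9 && (j : ℕ) == 2)

open Matrix

section BipartiteCoxeter

variable {R : Type*} [CommRing R] {m n : Type*} [Fintype m] [Fintype n] [DecidableEq m]
  [DecidableEq n]

theorem charmatrix_eq_smul_one_sub (M : Matrix m m R) :
    charmatrix M = (X : R[X]) • 1 - C.mapMatrix M := by
  rw [charmatrix, scalar_apply, smul_one_eq_diagonal]

theorem pow_card_mul_charpoly_fromBlocks_mul_transpose_sub_one (B : Matrix m n R) :
    (X + 1 : R[X]) ^ Fintype.card m * (fromBlocks (B * Bᵀ - 1) (-B) Bᵀ (-1)).charpoly =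
      (X + 1 : R[X]) ^ Fintype.card n *
        det ((X + 1 : R[X]) ^ 2 • (1 : Matrix m m R[X]) - (X : R[X]) • (B * Bᵀ).map C) := by
  set N := B.map C
  set s : R[X] := X + 1
  have hchar : charmatrix (fromBlocks (B * Bᵀ - 1) (-B) Bᵀ (-1)) =
      fromBlocks (s • 1 - N * Nᵀ) N (-Nᵀ) (s • 1) := by
    rw [charmatrix_fromBlocks, charmatrix_eq_smul_one_sub, charmatrix_eq_smul_one_sub,
      Matrix.map_neg _ (map_neg C), neg_neg]
    simp only [map_sub, map_one, map_neg, RingHom.mapMatrix_apply, Matrix.map_mul, transpose_map]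
    congr 1 <;> module
  -- The lower-left block cancels because the scalar `s` commutes with `Nᵀ`.
  have hmul : fromBlocks (s • 1 - N * Nᵀ) N (-Nᵀ) (s • 1) * fromBlocks (s • 1) 0 Nᵀ 1 =
      fromBlocks ((X + 1 : R[X]) ^ 2 • 1 - (X : R[X]) • (B * Bᵀ).map C) N 0 (s • 1) := by
    rw [fromBlocks_multiply]
    simp only [Matrix.map_mul, transpose_map, N, s, Matrix.mul_smul, Matrix.smul_mul,
      Matrix.mul_one, Matrix.one_mul, Matrix.mul_zero, sub_mul]
    congr 1 <;> module
  have hdet := congrArg det hmul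
  rw [det_mul, det_fromBlocks_zero₁₂, det_fromBlocks_zero₂₁, ← hchar] at hdet
  simp only [det_smul, det_one, mul_one] at hdet
  rw [charpoly]
  linear_combination hdet

theorem charpoly_fromBlocks_mul_transpose_sub_one (B : Matrix m m R) :
    (fromBlocks (B * Bᵀ - 1) (-B) Bᵀ (-1)).charpoly =
      det ((X + 1 : R[X]) ^ 2 • (1 : Matrix m m R[X]) - (X : R[X]) • (B * Bᵀ).map C) := by
  have hmonic : ((X + 1 : R[X]) ^ Fintype.card m).Monic := by
    simpa using (monic_X_add_C (1 : R)).pow (Fintype.card m)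
  exact hmonic.isRegular.left (pow_card_mul_charpoly_fromBlocks_mul_transpose_sub_one B)

end BipartiteCoxeter

section Reflection

variable {n R S : Type*} [DecidableEq n] [Semiring R] [Semiring S]

def reflection (q : Matrix n n R) (i : n) : Matrix n n R :=
  of fun k j => (if k = j then 1 else 0) + if k = i then q i j else 0

theorem reflection_map (f : R →+* S) (q : Matrix n n R) (i : n) :
    (reflection q i).map f = reflection (q.map f) i := by
  ext k j
  simp only [reflection, map_apply, of_apply, map_add]
  split_ifs <;> simp

end Reflection

noncomputable def lehmerPoly (R : Type*) [CommRing R] : R[X] :=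
  X ^ 10 + X ^ 9 - X ^ 7 - X ^ 6 - X ^ 5 - X ^ 4 - X ^ 3 + X + 1

theorem lehmerPoly_map {R S : Type*} [CommRing R] [CommRing S] (f : R →+* S) :
    (lehmerPoly R).map f = lehmerPoly S := by
  simp [lehmerPoly]

theorem exists_one_lt_isRoot_lehmerPoly : ∃ x : ℝ, 1 < x ∧ (lehmerPoly ℝ).IsRoot x := by
  obtain ⟨x, hx, hroot⟩ := intermediate_value_Ioo (show (1 : ℝ) ≤ 2 by norm_num)
    (lehmerPoly ℝ).continuousOn (show (0 : ℝ) ∈ Set.Ioo _ _ by norm_num [lehmerPoly])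
  exact ⟨x, hx.1, hroot⟩

def e10Form : Matrix (Fin 10) (Fin 10) ℤ :=
  of fun i j => if i = j then -2 else if e10Adj i j then 1 else 0

def e10Coxeter : Matrix (Fin 10) (Fin 10) ℤ :=
  (([0, 2, 4, 6, 8, 1, 3, 5, 7, 9] : List (Fin 10)).map (reflection e10Form)).prod

def evenOddEquiv : Fin 5 ⊕ Fin 5 ≃ Fin 10 where
  toFun := Sum.elim (fun i => ⟨2 * i, by omega⟩) (fun i => ⟨2 * i + 1, by omega⟩)
  invFun k := if (k : ℕ) % 2 = 0 then .inl ⟨k / 2, by omega⟩ else .inr ⟨k / 2, by omega⟩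
  left_inv := by decide
  right_inv := by decide

def e10Bipartite : Matrix (Fin 5) (Fin 5) ℤ :=
  of fun i j => if e10Adj (evenOddEquiv (.inl i)) (evenOddEquiv (.inr j)) then 1 else 0

theorem reindex_e10Coxeter :
    reindex evenOddEquiv.symm evenOddEquiv.symm e10Coxeter =
      fromBlocks (e10Bipartite * e10Bipartiteᵀ - 1) (-e10Bipartite) e10Bipartiteᵀ (-1) := by
  decide

theorem e10Bipartite_mul_transpose :
    e10Bipartite * e10Bipartiteᵀ =
      !![1, 1, 0, 0, 0; 1, 3, 1, 0, 0; 0, 1, 2, 1, 0; 0, 0, 1, 2, 1; 0, 0, 0, 1, 1] := by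
  decide

theorem charpoly_e10Coxeter : e10Coxeter.charpoly = lehmerPoly ℤ := by
  rw [← charpoly_reindex evenOddEquiv.symm, reindex_e10Coxeter,
    charpoly_fromBlocks_mul_transpose_sub_one, e10Bipartite_mul_transpose]
  simp [det_succ_row_zero, Fin.sum_univ_succ, Fin.succAbove, one_apply, lehmerPoly]
  ring

/-- The characteristic polynomial of the Coxeter element of the
tree `E₁₀` (product of the reflections in bipartite order) is Lehmer's
polynomial `x¹⁰ + x⁹ - x⁷ - x⁶ - x⁵ - x⁴ - x³ + x + 1`, which has a real root
strictly greater than `1`. -/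
theorem e10_coxeter_charpoly_lehmer
    (q : Fin 10 → Fin 10 → ℝ)
    (hq : ∀ i j, q i j =
      if i = j then (-2 : ℝ) else if e10Adj i j then 1 else 0)
    (R : Fin 10 → Matrix (Fin 10) (Fin 10) ℝ)
    (hR : ∀ i k j, R i k j =
      (if k = j then (1 : ℝ) else 0) + (if k = i then q i j else 0))
    (C : Matrix (Fin 10) (Fin 10) ℝ)
    (hC : C = (([0, 2, 4, 6, 8, 1, 3, 5, 7, 9] : List (Fin 10)).map R).prod) :
    C.charpoly =
      X ^ 10 + X ^ 9 - X ^ 7 - X ^ 6 - X ^ 5 - X ^ 4 - X ^ 3 + X + 1 ∧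
    ∃ x : ℝ, 1 < x ∧
      x ^ 10 + x ^ 9 - x ^ 7 - x ^ 6 - x ^ 5 - x ^ 4 - x ^ 3 + x + 1 = 0 := by
  have hq' : q = e10Form.map (Int.castRingHom ℝ) := by
    ext i j
    rw [hq]
    split_ifs <;> simp_all [e10Form]
  have hR' : R = fun i => (reflection e10Form i).map (Int.castRingHom ℝ) := by
    ext i k j
    rw [hR, reflection_map, ← hq']
    rfl
  have hC' : C = (Int.castRingHom ℝ).mapMatrix e10Coxeter := by
    rw [hC, hR', e10Coxeter, map_list_prod, List.map_map]
    rfl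
  obtain ⟨x, hx, hroot⟩ := exists_one_lt_isRoot_lehmerPoly
  refine ⟨?_, x, hx, by simpa [lehmerPoly] using hroot⟩
  rw [hC', RingHom.mapMatrix_apply, charpoly_map, charpoly_e10Coxeter, lehmerPoly_map,
    lehmerPoly]
end
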